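/- For n = 3, the matrix S_1·S_2 (product of the first two Apollonian generators) has order 3 but for n ≥ 4 the product S_1·S_2 has two eigenvalues e^{±iθ_n} with cos(θ_n/2) = 1/(n-1), and in particular S_1 S_2 has infinite order for n ≥ 4. -/

import Mathlib

open Matrix

/-- Descartes quadratic form matrix in dimension `n`. -/
noncomputable def QD (n : ℕ) : Matrix (Fin (n+2)) (Fin (n+2)) ℝ :=
  1 - (n : ℝ)⁻¹ • Matrix.of (fun _ _ => (1 : ℝ))

/-- Wilker quadratic form matrix in dimension `n`. -/
def QW (n : ℕ) : Matrix (Fin (n+2)) (Fin (n+2)) ℝ :=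
  Matrix.of (fun i j =>
    if (i = 0 ∧ j = 1) ∨ (i = 1 ∧ j = 0) then (-4 : ℝ)
    else if i = j then (if 2 ≤ (i : ℕ) then 2 else 0) else 0)

/-- Apollonian group generator `S j` in dimension `n`. -/
noncomputable def S (n : ℕ) (j : Fin (n+2)) : Matrix (Fin (n+2)) (Fin (n+2)) ℝ :=
  Matrix.of (fun i k =>
    if i = j then (if k = j then -1 else 2 / ((n : ℝ) - 1))
    else if i = k then 1 else 0)

/-- Dual Apollonian group generator `S j ^⊥` in dimension `n`. -/
def Sperp (n : ℕ) (j : Fin (n+2)) : Matrix (Fin (n+2)) (Fin (n+2)) ℝ :=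
  Matrix.of (fun i k =>
    if k = j then (if i = j then -1 else 2)
    else if i = k then 1 else 0)

/-!
On the plane spanned by `e₀, e₁` both generators act by `2 × 2` blocks, and `S₀ S₁` acts there by
`[[c² - 1, -c], [c, -1]]` with `c = 2 / (n - 1)`: determinant `1` and trace `c² - 2 = 2 cos θₙ`,
so `e^{± i θₙ}` are eigenvalues. If `(S₀ S₁)^k = 1` then `e^{i k θₙ} = 1`, so `θₙ` is a rational
multiple of `π` whose cosine `2 / (n - 1)² - 1` is rational; by Niven's theorem this cosine lies in
`{0, ±1/2, ±1}`, whereas for `n ≥ 4` it lies in `(-1, -7/9]`. For `n = 3`, `c = 1` and the order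
is computed directly.
-/

theorem S_three_zero_mul_S_three_one :
    S 3 0 * S 3 1 =
      !![0, -1, 2, 2, 2; 1, -1, 1, 1, 1; 0, 0, 1, 0, 0; 0, 0, 0, 1, 0; 0, 0, 0, 0, 1] := by
  ext i j
  simp only [S, mul_apply, of_apply, Nat.cast_ofNat, show (2 : ℝ) / (3 - 1) = 1 by norm_num]
  rw [Fin.sum_univ_five]
  fin_cases i <;> fin_cases j <;> simp [one_add_one_eq_two]

theorem orderOf_S_three_zero_mul_S_three_one : orderOf (S 3 0 * S 3 1) = 3 := by
  rw [S_three_zero_mul_S_three_one]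
  refine orderOf_eq_prime ?_ ?_
  · rw [pow_three]
    ext i j
    fin_cases i <;> fin_cases j <;> simp [mul_apply, Fin.sum_univ_succ]
  · intro h
    simpa using congrFun₂ h 0 0

theorem pow_eq_one_of_mulVec_eq_smul {ι K : Type*} [Fintype ι] [DecidableEq ι] [Field K]
    {A : Matrix ι ι K} {μ : K} {v : ι → K} (hv : v ≠ 0) (hAv : A *ᵥ v = μ • v) {k : ℕ}
    (hA : A ^ k = 1) : μ ^ k = 1 := by
  have hpow : ∀ m : ℕ, (A ^ m) *ᵥ v = μ ^ m • v := by
    intro m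
    induction m with
    | zero => simp
    | succ m ih => rw [pow_succ', ← mulVec_mulVec, ih, mulVec_smul, hAv, smul_smul, pow_succ]
  refine smul_left_injective K hv ?_
  simpa [hA] using (hpow k).symm

theorem cos_two_mul_arccos {x : ℝ} (hx₁ : -1 ≤ x) (hx₂ : x ≤ 1) :
    Real.cos (2 * Real.arccos x) = 2 * x ^ 2 - 1 := by
  rw [Real.cos_two_mul, Real.cos_arccos hx₁ hx₂]

section Complex

open Complex

theorem exp_mul_I_sq_add_one (t : ℝ) :
    exp (t * I) ^ 2 + 1 = ((2 * Real.cos t : ℝ) : ℂ) * exp (t * I) := by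
  rw [ofReal_mul, ofReal_ofNat, ofReal_cos, two_cos, add_mul, ← exp_add, ← exp_add,
    neg_mul, neg_add_cancel, exp_zero, sq, exp_add]

theorem exists_rat_mul_pi_of_exp_mul_I_pow_eq_one {t : ℝ} {k : ℕ} (hk : k ≠ 0)
    (h : exp (t * I) ^ k = 1) : ∃ r : ℚ, t = r * Real.pi := by
  rw [← exp_nat_mul, exp_eq_one_iff] at h
  obtain ⟨m, hm⟩ := h
  have hkt : (k : ℝ) * t = 2 * m * Real.pi := by
    apply ofReal_injective
    push_cast
    exact mul_right_cancel₀ I_ne_zero (by linear_combination hm)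
  refine ⟨2 * m / k, ?_⟩
  push_cast
  field_simp
  linarith

theorem map_ofReal_S_zero_mulVec (n : ℕ) (a b : ℂ) :
    (S n 0).map ofReal *ᵥ (Pi.single 0 a + Pi.single 1 b) =
      Pi.single 0 ((2 / ((n : ℝ) - 1) : ℝ) * b - a) + Pi.single 1 b := by
  ext i
  rcases eq_or_ne i 0 with rfl | h0
  · simp [S, mulVec_add]
    ring
  rcases eq_or_ne i 1 with rfl | h1
  · simp [S, mulVec_add]
  · simp [S, mulVec_add, h0, h1]

theorem map_ofReal_S_one_mulVec (n : ℕ) (a b : ℂ) :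
    (S n 1).map ofReal *ᵥ (Pi.single 0 a + Pi.single 1 b) =
      Pi.single 0 a + Pi.single 1 ((2 / ((n : ℝ) - 1) : ℝ) * a - b) := by
  ext i
  rcases eq_or_ne i 0 with rfl | h0
  · simp [S, mulVec_add]
  rcases eq_or_ne i 1 with rfl | h1
  · simp [S, mulVec_add]
    ring
  · simp [S, mulVec_add, h0, h1]

theorem exists_S_zero_mul_S_one_mulVec_eq_smul {n : ℕ} (hn : n ≠ 1) {μ : ℂ}
    (hμ : μ ^ 2 + 1 = (((2 / ((n : ℝ) - 1)) ^ 2 - 2 : ℝ) : ℂ) * μ) :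
    ∃ v : Fin (n + 2) → ℂ, v ≠ 0 ∧ (S n 0 * S n 1).map ofReal *ᵥ v = μ • v := by
  set c : ℝ := 2 / ((n : ℝ) - 1) with hc
  have hc0 : c ≠ 0 := div_ne_zero two_ne_zero (sub_ne_zero.2 (by exact_mod_cast hn))
  refine ⟨Pi.single 0 (μ + 1) + Pi.single 1 (c : ℂ), fun h => hc0 ?_, ?_⟩
  · simpa using congrFun h 1
  · rw [show (S n 0 * S n 1).map ofReal = (S n 0).map ofReal * (S n 1).map ofReal from
      Matrix.map_mul (f := ofRealHom), ← mulVec_mulVec, map_ofReal_S_one_mulVec,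
      map_ofReal_S_zero_mulVec, smul_add, ← Pi.single_smul, ← Pi.single_smul, smul_eq_mul,
      smul_eq_mul]
    simp only [← hc]
    push_cast at hμ
    congr 2
    · linear_combination -hμ
    · ring

theorem exists_S_zero_mul_S_one_mulVec_eq_exp_smul {n : ℕ} (hn : 2 ≤ n) {t : ℝ}
    (ht : Real.cos t = Real.cos (2 * Real.arccos (1 / ((n : ℝ) - 1)))) :
    ∃ v : Fin (n + 2) → ℂ, v ≠ 0 ∧ (S n 0 * S n 1).map ofReal *ᵥ v = exp (t * I) • v := by
  have hn₁ : 1 ≤ (n : ℝ) - 1 := by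
    have : (2 : ℝ) ≤ n := by exact_mod_cast hn
    linarith
  have hx₀ : 0 < 1 / ((n : ℝ) - 1) := one_div_pos.2 (by linarith)
  have hx₁ : 1 / ((n : ℝ) - 1) ≤ 1 := (div_le_one (by linarith)).2 hn₁
  refine exists_S_zero_mul_S_one_mulVec_eq_smul (by omega) ?_
  rw [exp_mul_I_sq_add_one, ht, cos_two_mul_arccos (by linarith) hx₁]
  congr 3
  ring

theorem S_zero_mul_S_one_pow_ne_one {n k : ℕ} (hn : 4 ≤ n) (hk : k ≠ 0) :
    (S n 0 * S n 1) ^ k ≠ 1 := by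
  intro hpow
  set x : ℝ := 1 / ((n : ℝ) - 1) with hx
  have hn₃ : (3 : ℝ) ≤ (n : ℝ) - 1 := by
    have : (4 : ℝ) ≤ n := by exact_mod_cast hn
    linarith
  have hx₀ : 0 < x := one_div_pos.2 (by linarith)
  have hx₁ : x ≤ 1 / 3 := one_div_le_one_div_of_le (by norm_num) hn₃
  obtain ⟨v, hv, hMv⟩ := exists_S_zero_mul_S_one_mulVec_eq_exp_smul (n := n) (by omega) rfl
  have hexp := pow_eq_one_of_mulVec_eq_smul hv hMv (k := k)
    ((Matrix.map_pow _ ofRealHom k).symm.trans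
      (by rw [hpow]; exact Matrix.map_one _ ofReal_zero ofReal_one))
  obtain ⟨r, hr⟩ := exists_rat_mul_pi_of_exp_mul_I_pow_eq_one hk hexp
  have hcos := cos_two_mul_arccos (x := x) (by linarith) (by linarith)
  have hniven := niven ⟨r, hr⟩
    ⟨2 * (1 / ((n : ℚ) - 1)) ^ 2 - 1, by rw [hcos, hx]; push_cast; rfl⟩
  rw [hcos] at hniven
  simp only [Set.mem_insert_iff, Set.mem_singleton_iff] at hniven
  rcases hniven with h | h | h | h | h <;> nlinarith

end Complex

theorem S1S2_order (n : ℕ) :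
    orderOf (S 3 0 * S 3 1) = 3 ∧
    (4 ≤ n →
      ((∃ v : Fin (n+2) → ℂ, v ≠ 0 ∧
          ((S n 0 * S n 1).map (Complex.ofReal)).mulVec v =
            Complex.exp ((2 * Real.arccos (1 / ((n : ℝ) - 1)) : ℝ) * Complex.I) • v) ∧
       (∃ v : Fin (n+2) → ℂ, v ≠ 0 ∧
          ((S n 0 * S n 1).map (Complex.ofReal)).mulVec v =
            Complex.exp (-((2 * Real.arccos (1 / ((n : ℝ) - 1)) : ℝ) * Complex.I)) • v) ∧
       (∀ k : ℕ, 1 ≤ k → (S n 0 * S n 1) ^ k ≠ 1))) := by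
  refine ⟨orderOf_S_three_zero_mul_S_three_one, fun hn =>
    ⟨exists_S_zero_mul_S_one_mulVec_eq_exp_smul (by omega) rfl, ?_,
      fun k hk => S_zero_mul_S_one_pow_ne_one hn (by omega)⟩⟩
  have h := exists_S_zero_mul_S_one_mulVec_eq_exp_smul (n := n) (by omega) (Real.cos_neg _)
  rwa [Complex.ofReal_neg, neg_mul] at h
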